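/- For d ≥ 1, the dual polytope D_d* of the reflexive cs-crosspolytope D_d defined by the Wirth matrix A_d = [[2·Id_{d−1},0],[1⋯1,1]] equals conv(±(m_d* − Σ_{i=1}^{d−1} c_i m_i*) : c_i ∈ {0,1}) in the dual basis m_1*, …, m_d*, and the only lattice points on the boundary of D_d* are its vertices. -/

import Mathlib

open Pointwise Matrix

/-- Ambient space `ℝ^d`. -/
abbrev E (d : ℕ) := Fin d → ℝ

/-- A point of the lattice `M ≅ ℤ^d`. -/
def IsLatticePt {d : ℕ} (x : E d) : Prop := ∀ i, ∃ n : ℤ, x i = (n : ℝ)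

/-- The standard pairing between `N_ℝ` and `M_ℝ`. -/
def dot {d : ℕ} (x y : E d) : ℝ := ∑ i, x i * y i

/-- The dual (polar) polytope `P* = {x : ⟨x,y⟩ ≥ -1 ∀ y ∈ P}`. -/
def polarDual {d : ℕ} (P : Set (E d)) : Set (E d) := {x | ∀ y ∈ P, -1 ≤ dot x y}

/-- A lattice polytope: convex hull of finitely many lattice points. -/
def IsLatticePolytope {d : ℕ} (P : Set (E d)) : Prop :=
  ∃ S : Finset (E d), (∀ x ∈ S, IsLatticePt x) ∧ P = convexHull ℝ (S : Set (E d))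

/-- A reflexive polytope: a lattice polytope with `0` in its interior whose polar dual is
again a lattice polytope (i.e. the hull of its lattice points). -/
def IsReflexive {d : ℕ} (P : Set (E d)) : Prop :=
  IsLatticePolytope P ∧ 0 ∈ interior P ∧
    polarDual P = convexHull ℝ {x | x ∈ polarDual P ∧ IsLatticePt x}

/-- A facet: a nonempty exposed face of dimension `d - 1`. -/
def IsFacet {d : ℕ} (P F : Set (E d)) : Prop :=
  IsExposed ℝ P F ∧ F.Nonempty ∧
    Module.finrank ℝ (affineSpan ℝ F).direction = d - 1

/-- Simplicial polytope: every facet is a simplex (hull of `d` affinely independent points). -/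
def IsSimplicial {d : ℕ} (P : Set (E d)) : Prop :=
  ∀ F, IsFacet P F → ∃ v : Fin d → E d,
    AffineIndependent ℝ v ∧ F = convexHull ℝ (Set.range v)

/-- Pseudo-symmetric: some facet `F` has `-F` also a facet. -/
def IsPseudoSymmetric {d : ℕ} (P : Set (E d)) : Prop :=
  ∃ F, IsFacet P F ∧ IsFacet P (-F)

/-- Application of an integer matrix to a point of `ℝ^d`. -/
def applyU {d : ℕ} (U : Matrix (Fin d) (Fin d) ℤ) (x : E d) : E d :=
  (U.map (Int.cast : ℤ → ℝ)) *ᵥ x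

/-- Wirth matrix: block form `[[2·Id_f, 0], [C, Id_{d-f}]]` with `C` a `{0,1}`-matrix
each of whose columns has an odd number of `1`'s. -/
def IsWirth {d : ℕ} (A : Matrix (Fin d) (Fin d) ℤ) : Prop :=
  ∃ f : ℕ, f < d ∧
    (∀ i j : Fin d, (i : ℕ) < f → (j : ℕ) < f → A i j = if i = j then 2 else 0) ∧
    (∀ i j : Fin d, (i : ℕ) < f → f ≤ (j : ℕ) → A i j = 0) ∧
    (∀ i j : Fin d, f ≤ (i : ℕ) → (j : ℕ) < f → A i j = 0 ∨ A i j = 1) ∧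
    (∀ i j : Fin d, f ≤ (i : ℕ) → f ≤ (j : ℕ) → A i j = if i = j then 1 else 0) ∧
    (∀ j : Fin d, (j : ℕ) < f →
      Odd (Finset.univ.filter (fun i : Fin d => f ≤ (i : ℕ) ∧ A i j = 1)).card)

/-- The Wirth matrix `A_d` with `2`'s on the first `d-1` diagonal entries and last row all `1`'s. -/
def Ad (d : ℕ) : Matrix (Fin d) (Fin d) ℤ :=
  fun i j => if (i : ℕ) = d - 1 then 1 else if i = j then 2 else 0

/-- The reflexive cs-crosspolytope `D_d` associated to `A_d`. -/
def DdSet (d : ℕ) : Set (E d) :=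
  convexHull ℝ
    (Set.range (fun j : Fin d => (fun i => (Ad d i j : ℝ) : E d)) ∪
      Set.range (fun j : Fin d => (fun i => -(Ad d i j : ℝ) : E d)))

/-- The `i`-th standard (dual) unit vector in `ℝ^d`. -/
def unitVec {d : ℕ} (i : Fin d) : E d := Pi.single i (1 : ℝ)

/-- The claimed vertices of `D_d*`: the points `±(m_d* - ∑_{i<d-1} c_i m_i*)`, `c_i ∈ {0,1}`. -/
def DdDualVerts (d : ℕ) : Set (E d) :=
  {x | ∃ h : 0 < d, ∃ c : Fin d → ℝ, (∀ i, c i = 0 ∨ c i = 1) ∧ ∃ ε : ℝ,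
      (ε = 1 ∨ ε = -1) ∧
      x = ε • (unitVec (⟨d - 1, by omega⟩ : Fin d) -
        ∑ i ∈ Finset.univ.filter (fun i : Fin d => (i : ℕ) < d - 1), c i • unitVec i)}

/-!
Pairing with the columns of `A_d` is the linear automorphism `x ↦ A_dᵀ x` of `ℝ^d`, with
coordinates `x_d + 2 x_j` (`j < d`) and `x_d`. As `D_d` is the hull of the `±`columns, `D_d*` is
the preimage of the cube `[-1, 1]^d`, hence the hull of the preimages of `{±1}^d`, which are
exactly the points `±(m_d* - ∑ c_i m_i*)`. A lattice point on the boundary is sent to a nonzero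
integer point of the cube all of whose coordinates have the parity of `x_d`; so they are all odd,
i.e. `±1`, and the point is a vertex.
-/

open Set

section Polar

variable {d : ℕ}

lemma dot_isLinearMap (x : E d) : IsLinearMap ℝ (dot x) :=
  ⟨fun y z => dotProduct_add x y z, fun c y => dotProduct_smul c x y⟩

lemma polarDual_convexHull (s : Set (E d)) : polarDual (convexHull ℝ s) = polarDual s :=
  Subset.antisymm (fun _ hx y hy => hx y (subset_convexHull ℝ s hy))
    fun x hx _ hy => convexHull_min hx (convex_halfSpace_ge (dot_isLinearMap x) (-1)) hy

lemma polarDual_range_union_neg {ι : Type*} (v : ι → E d) :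
    polarDual (range v ∪ range (-v)) = {x | ∀ j, |dot x (v j)| ≤ 1} := by
  have dot_neg (x y : E d) : dot x (-y) = -dot x y := dotProduct_neg x y
  ext x
  simp only [polarDual, mem_union, forall₂_or_left, forall_mem_range, mem_ofPred_eq, Pi.neg_apply,
    dot_neg, neg_le_neg_iff, abs_le, forall_and]

end Polar

lemma convexHull_signVectors {ι : Type*} [Fintype ι] :
    convexHull ℝ (univ.pi fun _ : ι => ({-1, 1} : Set ℝ)) = Metric.closedBall 0 1 := by
  rw [convexHull_pi, closedBall_pi _ zero_le_one]
  simp [convexHull_pair, segment_eq_Icc, Real.closedBall_eq_Icc]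

section Wirth

variable {n : ℕ}

noncomputable def adTransposeEquiv (n : ℕ) : E (n + 1) ≃ₗ[ℝ] E (n + 1) where
  toFun x j := x (Fin.last n) + if j = Fin.last n then 0 else 2 * x j
  invFun u i := if i = Fin.last n then u i else (u i - u (Fin.last n)) / 2
  map_add' x y := by ext j; simp only [Pi.add_apply]; split_ifs <;> ring
  map_smul' c x := by
    ext j; simp only [Pi.smul_apply, smul_eq_mul, RingHom.id_apply]; split_ifs <;> ring
  left_inv x := by ext i; by_cases h : i = Fin.last n <;> simp [h]
  right_inv u := by ext j; by_cases h : j = Fin.last n <;> simp [h]; ring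

lemma adTransposeEquiv_apply (x : E (n + 1)) (j : Fin (n + 1)) :
    adTransposeEquiv n x j = x (Fin.last n) + if j = Fin.last n then 0 else 2 * x j := rfl

lemma dot_Ad_col (x : E (n + 1)) (j : Fin (n + 1)) :
    dot x (fun i => (Ad (n + 1) i j : ℝ)) = adTransposeEquiv n x j := by
  have hval (i : Fin n) : (i : ℕ) ≠ n := i.isLt.ne
  cases j using Fin.lastCases with
  | last => simp [dot, Ad, Fin.sum_univ_castSucc, adTransposeEquiv_apply, hval]
  | cast k => simp [dot, Ad, Fin.sum_univ_castSucc, adTransposeEquiv_apply, hval]; ring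

lemma polarDual_DdSet :
    polarDual (DdSet (n + 1)) = adTransposeEquiv n ⁻¹' Metric.closedBall 0 1 := by
  let col : Fin (n + 1) → E (n + 1) := fun j i => (Ad (n + 1) i j : ℝ)
  have hD : DdSet (n + 1) = convexHull ℝ (range col ∪ range (-col)) := rfl
  ext x
  simp only [hD, polarDual_convexHull, polarDual_range_union_neg, col, dot_Ad_col, mem_ofPred_eq,
    mem_preimage, mem_closedBall_zero_iff, pi_norm_le_iff_of_nonneg zero_le_one, Real.norm_eq_abs]

lemma mem_DdDualVerts_iff {x : E (n + 1)} :
    x ∈ DdDualVerts (n + 1) ↔ ∃ c : Fin (n + 1) → ℝ, (∀ i, c i = 0 ∨ c i = 1) ∧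
      ∃ ε : ℝ, (ε = 1 ∨ ε = -1) ∧
        x = fun i => ε * if i = Fin.last n then 1 else -c i := by
  have hvert (c : Fin (n + 1) → ℝ) (ε : ℝ) :
      ε • (unitVec (⟨n, n.lt_succ_self⟩ : Fin (n + 1)) -
        ∑ k ∈ Finset.univ.filter (fun k : Fin (n + 1) => (k : ℕ) < n), c k • unitVec k) =
        fun i => ε * if i = Fin.last n then 1 else -c i := by
    rw [show (⟨n, n.lt_succ_self⟩ : Fin (n + 1)) = Fin.last n from rfl]
    ext i
    cases i using Fin.lastCases with
    | last => simp [unitVec, Pi.single_apply]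
    | cast k => simp [unitVec, Pi.single_apply]
  simp only [DdDualVerts, Nat.add_sub_cancel]
  exact ⟨fun ⟨_, h⟩ => by simpa only [hvert] using h,
    fun h => ⟨n.succ_pos, by simpa only [hvert] using h⟩⟩

lemma DdDualVerts_eq :
    DdDualVerts (n + 1) = adTransposeEquiv n ⁻¹' univ.pi fun _ => {-1, 1} := by
  ext x
  simp only [mem_DdDualVerts_iff, mem_preimage, mem_univ_pi, mem_insert_iff, mem_singleton_iff,
    adTransposeEquiv_apply]
  constructor
  · rintro ⟨c, hc, ε, hε, rfl⟩ j
    by_cases hj : j = Fin.last n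
    · simpa [hj, or_comm] using hε
    · rcases hc j with h | h <;> rcases hε with rfl | rfl <;> simp [hj, h] <;> norm_num
  · intro hx
    have hε : x (Fin.last n) = 1 ∨ x (Fin.last n) = -1 := by
      simpa [or_comm] using hx (Fin.last n)
    refine ⟨fun i => if i = Fin.last n then 0 else -x (Fin.last n) * x i, fun i => ?_,
      x (Fin.last n), hε, funext fun i => ?_⟩
    all_goals by_cases hi : i = Fin.last n
    · simp [hi]
    · have hxi := hx i
      simp only [hi, if_false] at hxi ⊢
      rcases hε with h | h <;> rw [h] at hxi ⊢ <;> rcases hxi with h' | h' <;>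
        first | (left; linarith) | (right; linarith)
    · simp [hi]
    · simp only [hi, if_false]
      rcases hε with h | h <;> rw [h] <;> ring

lemma frontier_polarDual_DdSet :
    frontier (polarDual (DdSet (n + 1))) = adTransposeEquiv n ⁻¹' Metric.sphere 0 1 := by
  rw [polarDual_DdSet, ← frontier_closedBall _ one_ne_zero]
  exact ((adTransposeEquiv n).toContinuousLinearEquiv.toHomeomorph.preimage_frontier _).symm

lemma adTransposeEquiv_mem_signVectors {x : E (n + 1)} (hx : IsLatticePt x)
    (hsphere : adTransposeEquiv n x ∈ Metric.sphere 0 1) :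
    adTransposeEquiv n x ∈ univ.pi fun _ => {-1, 1} := by
  choose m hm using hx
  set y := adTransposeEquiv n x
  set t : Fin (n + 1) → ℤ := fun j => if j = Fin.last n then 0 else m j
  have hy (j) : y j = ((m (Fin.last n) + 2 * t j : ℤ) : ℝ) := by
    by_cases hj : j = Fin.last n <;> simp [y, t, adTransposeEquiv_apply, hj, hm]
  rw [mem_sphere_zero_iff_norm] at hsphere
  have hbound (j) : -1 ≤ m (Fin.last n) + 2 * t j ∧ m (Fin.last n) + 2 * t j ≤ 1 := by
    have := (norm_le_pi_norm y j).trans_eq hsphere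
    rw [Real.norm_eq_abs, abs_le, hy] at this
    exact_mod_cast this
  obtain ⟨k, hk⟩ : ∃ k, y k ≠ 0 := by
    by_contra! h
    simp [funext h] at hsphere
  have hk' : m (Fin.last n) + 2 * t k ≠ 0 := by exact_mod_cast hy k ▸ hk
  intro j _
  have hj : m (Fin.last n) + 2 * t j = -1 ∨ m (Fin.last n) + 2 * t j = 1 := by
    have hbj := hbound j
    have hbk := hbound k
    omega
  rw [mem_insert_iff, mem_singleton_iff, hy]
  rcases hj with h | h <;> simp [h]

end Wirth

theorem Dd_dual_description (d : ℕ) (hd : 0 < d) :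
    polarDual (DdSet d) = convexHull ℝ (DdDualVerts d) ∧
    ∀ x ∈ frontier (polarDual (DdSet d)), IsLatticePt x → x ∈ DdDualVerts d := by
  obtain ⟨n, rfl⟩ := Nat.exists_eq_add_one_of_ne_zero hd.ne'
  refine ⟨?_, fun x hx hlat => ?_⟩
  · rw [polarDual_DdSet, DdDualVerts_eq, ← convexHull_signVectors,
      ← LinearEquiv.image_symm_eq_preimage, ← LinearEquiv.image_symm_eq_preimage]
    exact (adTransposeEquiv n).symm.toLinearMap.image_convexHull _
  · rw [frontier_polarDual_DdSet] at hx
    rw [DdDualVerts_eq]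
    exact adTransposeEquiv_mem_signVectors hlat hx
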